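/- arXiv:math/0403279 — 3 statements merged into one kernel-verified Lean document; each statement's English description precedes it below -/
import Mathlib

section
/- For every integer m ≥ 1, the quantum integer identity ∑_{i=1}^{m} ([2i]/[i])·[m−i+1] = m·[m+1] holds in ℚ(v), where [k] = (v^k − v^{−k})/(v − v^{−1}). -/
/-- The quantum integer `[k] = (v^k - v^{-k})/(v - v^{-1})` in `ℚ(v)`. -/
noncomputable def qint (k : ℕ) : RatFunc ℚ :=
  ((RatFunc.X : RatFunc ℚ) ^ k - (RatFunc.X : RatFunc ℚ)⁻¹ ^ k) /
    ((RatFunc.X : RatFunc ℚ) - (RatFunc.X : RatFunc ℚ)⁻¹)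

/-!
Since `[2i]/[i] = v^i + v^{-i}` and `(v^a + v^{-a})[b] = [b+a] + [b-a]`, the `i`-th summand is
`[m+1] + [m+1-2i]`. The exponents `m+1-2i` for `1 ≤ i ≤ m` are symmetric about `0`, so the
second terms cancel in total, leaving `m·[m+1]`.
-/

open Finset

theorem Finset.sum_Icc_sub_two_mul_reflect {M : Type*} [AddCommMonoid M] (g : ℤ → M) (m : ℕ) :
    ∑ i ∈ Icc 1 m, g (m + 1 - 2 * i) = ∑ i ∈ Icc 1 m, g (-(m + 1 - 2 * i)) := by
  have hmaps : ∀ i ∈ Icc 1 m, m + 1 - i ∈ Icc 1 m := by simp only [mem_Icc]; omega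
  have hinv : ∀ i ∈ Icc 1 m, m + 1 - (m + 1 - i) = i := by simp only [mem_Icc]; omega
  refine sum_nbij' _ _ hmaps hmaps hinv hinv fun i hi ↦ ?_
  rw [mem_Icc] at hi
  congr 1
  omega

section QuantumInteger

variable {K : Type*} [Field K]

noncomputable def qInt (v : K) (k : ℤ) : K :=
  (v ^ k - v ^ (-k)) / (v - v⁻¹)

theorem zpow_sub_zpow_neg_ne_zero {v : K} (hv₀ : v ≠ 0) (hv : ¬IsOfFinOrder v) {n : ℕ}
    (hn : n ≠ 0) : v ^ (n : ℤ) - v ^ (-(n : ℤ)) ≠ 0 := by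
  intro h
  rw [sub_eq_zero, zpow_neg, zpow_natCast, ← mul_eq_one_iff_eq_inv₀ (pow_ne_zero n hv₀)] at h
  refine hv (isOfFinOrder_iff_pow_eq_one.2 ⟨2 * n, by omega, ?_⟩)
  rwa [two_mul, pow_add]

theorem qInt_ne_zero {v : K} (hv₀ : v ≠ 0) (hv : ¬IsOfFinOrder v) {k : ℕ} (hk : k ≠ 0) :
    qInt v k ≠ 0 :=
  div_ne_zero (zpow_sub_zpow_neg_ne_zero hv₀ hv hk)
    (by simpa using zpow_sub_zpow_neg_ne_zero hv₀ hv one_ne_zero)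

theorem qInt_two_mul (v : K) (k : ℤ) : qInt v (2 * k) = (v ^ k + v ^ (-k)) * qInt v k := by
  simp only [qInt, mul_comm 2 k, ← neg_mul, zpow_mul, zpow_two]
  ring

theorem qInt_two_mul_div {v : K} (hv₀ : v ≠ 0) (hv : ¬IsOfFinOrder v) {k : ℕ} (hk : k ≠ 0) :
    qInt v (2 * k) / qInt v k = v ^ (k : ℤ) + v ^ (-(k : ℤ)) := by
  rw [qInt_two_mul, mul_div_cancel_right₀ _ (qInt_ne_zero hv₀ hv hk)]

theorem zpow_add_zpow_neg_mul_qInt {v : K} (hv₀ : v ≠ 0) (a b : ℤ) :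
    (v ^ a + v ^ (-a)) * qInt v b = qInt v (b + a) + qInt v (b - a) := by
  simp only [qInt, ← add_div, ← mul_div_assoc, zpow_add₀ hv₀, zpow_sub₀ hv₀, neg_add, neg_sub,
    zpow_neg]
  ring

theorem sum_Icc_qInt_sub_two_mul (v : K) (m : ℕ) :
    ∑ i ∈ Icc 1 m, qInt v (m + 1 - 2 * i) = 0 := by
  simp only [qInt, ← sum_div, sum_sub_distrib]
  rw [sum_Icc_sub_two_mul_reflect (v ^ ·), sub_self, zero_div]

end QuantumInteger

theorem RatFunc.not_isOfFinOrder_X {K : Type*} [Field K] : ¬IsOfFinOrder (X : RatFunc K) := by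
  rw [isOfFinOrder_iff_pow_eq_one]
  rintro ⟨n, hn, h⟩
  rw [← algebraMap_X, ← map_pow, ← map_one (algebraMap (Polynomial K) (RatFunc K))] at h
  have := congrArg Polynomial.natDegree (algebraMap_injective K h)
  simp only [Polynomial.natDegree_X_pow, Polynomial.natDegree_one] at this
  omega

theorem qint_eq_qInt (k : ℕ) : qint k = qInt RatFunc.X k := by
  rw [qint, qInt, inv_pow, ← zpow_natCast, zpow_neg]

theorem quantum_integer_identity_general (m : ℕ) :
    ∑ i ∈ Finset.Icc 1 m, (qint (2 * i) / qint i) * qint (m - i + 1)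
      = (m : RatFunc ℚ) * qint (m + 1) := by
  have hX₀ : (RatFunc.X : RatFunc ℚ) ≠ 0 := RatFunc.X_ne_zero
  calc _ = ∑ i ∈ Icc 1 m, (qInt RatFunc.X (m + 1) + qInt RatFunc.X (m + 1 - 2 * i)) := by
        refine sum_congr rfl fun i hi ↦ ?_
        obtain ⟨hi₁, hi₂⟩ := mem_Icc.1 hi
        rw [qint_eq_qInt, qint_eq_qInt, qint_eq_qInt, Nat.cast_mul, Nat.cast_ofNat,
          qInt_two_mul_div hX₀ RatFunc.not_isOfFinOrder_X (by omega),
          zpow_add_zpow_neg_mul_qInt hX₀]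
        congr 2 <;> push_cast [Nat.cast_sub hi₂] <;> ring
    _ = (m : RatFunc ℚ) * qInt RatFunc.X (m + 1) := by
        rw [sum_add_distrib, sum_Icc_qInt_sub_two_mul, sum_const, Nat.card_Icc, nsmul_eq_mul,
          add_zero, add_tsub_cancel_right]
    _ = _ := by rw [qint_eq_qInt, Nat.cast_succ]

/-- For every `m ≥ 1`, `∑_{i=1}^m ([2i]/[i])·[m-i+1] = m·[m+1]` in `ℚ(v)`. -/
theorem quantum_integer_identity (m : ℕ) (hm : 1 ≤ m) :
    ∑ i ∈ Finset.Icc 1 m, (qint (2 * i) / qint i) * qint (m - i + 1)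
      = (m : RatFunc ℚ) * qint (m + 1) :=
  quantum_integer_identity_general m
end

section
/- Let k be a field and x = (x₁, x₂) a representation of the Kronecker quiver on (kⁿ, kⁿ). If there exists [λ₀ : μ₀] ∈ ℙ¹(k) such that λx₁ + μx₂ is invertible for all [λ : μ] ≠ [λ₀ : μ₀] and λ₀x₁ + μ₀x₂ has one-dimensional kernel, then x has no subrepresentation with dimension vector (a, b) satisfying a > b, i.e. every subrepresentation (W₀, W₁) of x satisfies dim W₁ ≥ dim W₀. -/
open Module LinearMap

/-- Let `x = (x₁, x₂)` be a representation of the Kronecker quiver on `(kⁿ, kⁿ)`.  If there is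
`[λ₀ : μ₀] ∈ ℙ¹(k)` such that `λx₁ + μx₂` is invertible for all `[λ : μ] ≠ [λ₀ : μ₀]` and
`λ₀x₁ + μ₀x₂` has one-dimensional kernel (i.e. `x ≅ R_{z,n}` is regular indecomposable), then
every subrepresentation `(W₀, W₁)` of `x` satisfies `dim W₁ ≥ dim W₀`. -/
theorem regular_indecomposable_subrep_dim {k : Type*} [Field k] {n : ℕ}
    (x₁ x₂ : (Fin n → k) →ₗ[k] (Fin n → k))
    (lam0 mu0 : k) (h0 : (lam0, mu0) ≠ (0, 0))
    (hbij : ∀ lam mu : k, (lam, mu) ≠ (0, 0) → lam * mu0 ≠ mu * lam0 →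
      Function.Bijective ⇑(lam • x₁ + mu • x₂))
    (hker : finrank k (LinearMap.ker (lam0 • x₁ + mu0 • x₂)) = 1)
    (W₀ W₁ : Submodule k (Fin n → k))
    (hW₁ : ∀ w ∈ W₀, x₁ w ∈ W₁) (hW₂ : ∀ w ∈ W₀, x₂ w ∈ W₁) :
    finrank k W₀ ≤ finrank k W₁ := by
  -- choose (lam, mu) not proportional to (lam0, mu0)
  obtain ⟨lam, mu, hne, hnp⟩ : ∃ lam mu : k, (lam, mu) ≠ (0, 0) ∧ lam * mu0 ≠ mu * lam0 := by
    by_cases hl : lam0 = 0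
    · have hm : mu0 ≠ 0 := by
        intro hm; exact h0 (by simp [hl, hm])
      exact ⟨1, 0, by simp, by simp [hl, hm]⟩
    · exact ⟨0, 1, by simp, by simpa using Ne.symm hl⟩
  have hb := hbij lam mu hne hnp
  set f : (Fin n → k) →ₗ[k] (Fin n → k) := lam • x₁ + mu • x₂ with hf
  have hmem : ∀ w ∈ W₀, f w ∈ W₁ := by
    intro w hw
    simp only [hf, LinearMap.add_apply, LinearMap.smul_apply]
    exact W₁.add_mem (W₁.smul_mem _ (hW₁ w hw)) (W₁.smul_mem _ (hW₂ w hw))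
  have hinj : Function.Injective (f.restrict hmem) := by
    intro a b hab
    have : f a = f b := by
      have := congrArg Subtype.val hab
      simpa [LinearMap.restrict_apply] using this
    exact Subtype.ext (hb.1 this)
  exact LinearMap.finrank_le_finrank_of_injective hinj
end

section
/- Let k be an algebraically closed field and let (V₀, V₁, x₁, x₂) be a regular representation of the Kronecker quiver, i.e. λx₁ + μx₂ is an isomorphism for all but finitely many [λ : μ] ∈ ℙ¹(k) (so in particular dim V₀ = dim V₁). Then for every one-dimensional subspace L ⊆ V₁, there is a unique minimal subrepresentation (R₀, R₁) of (V₀, V₁) with L ⊆ R₁ such that (R₀, R₁, x₁|, x₂|) is again regular; i.e. the intersection of all regular subrepresentations containing (0, L) is itself a regular subrepresentation. -/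
open Module

variable {k V₀ V₁ : Type*} [Field k] [AddCommGroup V₀] [Module k V₀]
  [AddCommGroup V₁] [Module k V₁]

/-- `(W₀, W₁)` is a subrepresentation of the Kronecker quiver representation `(x₁, x₂)`
which is regular: the pair is preserved by both maps, has equal graded dimensions, and for
all but finitely many `[λ : μ] ∈ ℙ¹(k)` the restriction of `λx₁ + μx₂` to `W₀ → W₁` is
bijective (image equal to `W₁` and kernel meeting `W₀` trivially). -/
def IsRegSubrep (x₁ x₂ : V₀ →ₗ[k] V₁) (W₀ : Submodule k V₀) (W₁ : Submodule k V₁) : Prop :=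
  (∀ w ∈ W₀, x₁ w ∈ W₁) ∧ (∀ w ∈ W₀, x₂ w ∈ W₁) ∧
    finrank k W₀ = finrank k W₁ ∧
    {p : Projectivization k (k × k) |
      ¬ (Submodule.map (p.rep.1 • x₁ + p.rep.2 • x₂) W₀ = W₁ ∧
          Disjoint (LinearMap.ker (p.rep.1 • x₁ + p.rep.2 • x₂)) W₀)}.Finite


lemma proj_infinite [Infinite k] : Infinite (Projectivization k (k × k)) := by
  apply Infinite.of_injective (fun a : k => Projectivization.mk k (a, 1) (by simp))
  intro a b h
  rw [Projectivization.mk_eq_mk_iff] at h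
  obtain ⟨c, hc⟩ := h
  have h2 : (c : k) * 1 = 1 := congrArg Prod.snd hc
  have h1 : (c : k) * b = a := congrArg Prod.fst hc
  simp at h2
  simpa [h2] using h1.symm

lemma IsRegSubrep.inf [IsAlgClosed k] {x₁ x₂ : V₀ →ₗ[k] V₁}
    (htop : IsRegSubrep x₁ x₂ ⊤ ⊤)
    {W₀ U₀ : Submodule k V₀} {W₁ U₁ : Submodule k V₁}
    (hW : IsRegSubrep x₁ x₂ W₀ W₁) (hU : IsRegSubrep x₁ x₂ U₀ U₁) :
    IsRegSubrep x₁ x₂ (W₀ ⊓ U₀) (W₁ ⊓ U₁) := by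
  obtain ⟨hW1, hW2, hWr, hWf⟩ := hW
  obtain ⟨hU1, hU2, hUr, hUf⟩ := hU
  obtain ⟨-, -, -, hTf⟩ := htop
  have key : ∀ p : Projectivization k (k × k), p ∉ ((hWf.union hUf).union hTf).toFinset →
      Function.Injective (p.rep.1 • x₁ + p.rep.2 • x₂) ∧
      Submodule.map (p.rep.1 • x₁ + p.rep.2 • x₂) (W₀ ⊓ U₀) = W₁ ⊓ U₁ ∧
        Disjoint (LinearMap.ker (p.rep.1 • x₁ + p.rep.2 • x₂)) (W₀ ⊓ U₀) := by
    intro p hp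
    rw [Set.Finite.mem_toFinset] at hp
    simp only [Set.mem_union, Set.mem_setOf_eq, not_or, not_not] at hp
    obtain ⟨⟨hpW, hpU⟩, hpT⟩ := hp
    have hinj : Function.Injective (p.rep.1 • x₁ + p.rep.2 • x₂) := by
      have := hpT.2
      rw [disjoint_top] at this
      exact LinearMap.ker_eq_bot.1 this
    refine ⟨hinj, ?_, ?_⟩
    · rw [Submodule.map_inf _ hinj, hpW.1, hpU.1]
    · rw [LinearMap.ker_eq_bot.2 hinj]
      exact disjoint_bot_left
  have : Infinite (Projectivization k (k × k)) := proj_infinite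
  obtain ⟨p, hp⟩ := Finset.exists_notMem ((hWf.union hUf).union hTf).toFinset
  obtain ⟨hinj, hmap, hker⟩ := key p hp
  refine ⟨fun w hw => ⟨hW1 w hw.1, hU1 w hw.2⟩, fun w hw => ⟨hW2 w hw.1, hU2 w hw.2⟩, ?_, ?_⟩
  · rw [← hmap]
    exact (Submodule.equivMapOfInjective _ hinj _).finrank_eq
  · apply Set.Finite.subset (((hWf.union hUf).union hTf))
    intro p hp
    by_contra hcon
    exact hp ((key p (by simpa [Set.Finite.mem_toFinset] using hcon)).2)

/-- Let `k` be algebraically closed and `(V₀, V₁, x₁, x₂)` a regular representation of the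
Kronecker quiver.  Then for every line `L ⊆ V₁`, the intersection of all regular
subrepresentations containing `(0, L)` is itself a regular subrepresentation containing
`(0, L)`; in particular there is a unique minimal such subrepresentation. -/
theorem minimal_regular_subrep_containing_line [IsAlgClosed k]
    [FiniteDimensional k V₀] [FiniteDimensional k V₁]
    (x₁ x₂ : V₀ →ₗ[k] V₁) (hreg : IsRegSubrep x₁ x₂ ⊤ ⊤)
    (L : Submodule k V₁) (hL : finrank k L = 1) :
    IsRegSubrep x₁ x₂
        (sInf (Prod.fst '' {W : Submodule k V₀ × Submodule k V₁ |
          IsRegSubrep x₁ x₂ W.1 W.2 ∧ L ≤ W.2}))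
        (sInf (Prod.snd '' {W : Submodule k V₀ × Submodule k V₁ |
          IsRegSubrep x₁ x₂ W.1 W.2 ∧ L ≤ W.2})) ∧
      L ≤ sInf (Prod.snd '' {W : Submodule k V₀ × Submodule k V₁ |
          IsRegSubrep x₁ x₂ W.1 W.2 ∧ L ≤ W.2}) := by
  set S : Set (Submodule k V₀ × Submodule k V₁) :=
    {W | IsRegSubrep x₁ x₂ W.1 W.2 ∧ L ≤ W.2} with hS
  have hSne : S.Nonempty := ⟨(⊤, ⊤), hreg, le_top⟩
  set f : Submodule k V₀ × Submodule k V₁ → ℕ :=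
    fun W => finrank k W.1 + finrank k W.2 with hf
  have hne : (f '' S).Nonempty := hSne.image f
  obtain ⟨W, hWS, hWn⟩ := (Nat.sInf_mem hne : sInf (f '' S) ∈ f '' S)
  have hmin : ∀ U ∈ S, W.1 ≤ U.1 ∧ W.2 ≤ U.2 := by
    intro U hUS
    have hIS : (W.1 ⊓ U.1, W.2 ⊓ U.2) ∈ S :=
      ⟨IsRegSubrep.inf hreg hWS.1 hUS.1, le_inf hWS.2 hUS.2⟩
    have h1 : finrank k (W.1 ⊓ U.1 : Submodule k V₀) ≤ finrank k W.1 :=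
      Submodule.finrank_mono inf_le_left
    have h2 : finrank k (W.2 ⊓ U.2 : Submodule k V₁) ≤ finrank k W.2 :=
      Submodule.finrank_mono inf_le_left
    have hge : f W ≤ f (W.1 ⊓ U.1, W.2 ⊓ U.2) := by
      rw [hWn]; exact Nat.sInf_le ⟨_, hIS, rfl⟩
    simp only [hf] at hge
    have e1 : W.1 ⊓ U.1 = W.1 :=
      Submodule.eq_of_le_of_finrank_le inf_le_left (by omega)
    have e2 : W.2 ⊓ U.2 = W.2 :=
      Submodule.eq_of_le_of_finrank_le inf_le_left (by omega)
    exact ⟨le_of_inf_eq e1, le_of_inf_eq e2⟩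
  have e1 : sInf (Prod.fst '' S) = W.1 := by
    refine le_antisymm (sInf_le ⟨W, hWS, rfl⟩) (le_sInf ?_)
    rintro a ⟨U, hU, rfl⟩
    exact (hmin U hU).1
  have e2 : sInf (Prod.snd '' S) = W.2 := by
    refine le_antisymm (sInf_le ⟨W, hWS, rfl⟩) (le_sInf ?_)
    rintro a ⟨U, hU, rfl⟩
    exact (hmin U hU).2
  rw [e1, e2]
  exact ⟨hWS.1, hWS.2⟩
end
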